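/- Let φ : (M, ≤, u) → (N, ≤, v) be a morphism of scaled partially ordered abelian semigroups. Then φ is a stable order embedding if and only if S(M, ≤, u) = { g ∘ φ : g ∈ S(N, ≤, v) }. -/

import Mathlib

/-- A state on a scaled partially ordered abelian semigroup `(M, ≤, u)`. -/
def IsState {M : Type*} [AddCommMonoid M] [PartialOrder M] (u : M) (s : M → ℝ) : Prop :=
  s 0 = 0 ∧ (∀ x y : M, s (x + y) = s x + s y) ∧
    (∀ x y : M, x ≤ y → s x ≤ s y) ∧ s u = 1

/-- The state space `S(M, ≤, u)`. -/
def StateSpace (M : Type*) [AddCommMonoid M] [PartialOrder M] (u : M) : Set (M → ℝ) :=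
  {s | IsState u s}

/-- A morphism `φ : (M, ≤, u) → (N, ≤, v)` of scaled partially ordered abelian
semigroups is a stable order embedding iff for all `x y : M`:
`∃ n > 0, ∃ z, n • x + z + u ≤ n • y + z` iff
`∃ m > 0, ∃ w, m • φ x + v + w ≤ m • φ y + w`. -/
def IsStableOrderEmbedding {M N : Type*} [AddCommMonoid M] [PartialOrder M]
    [AddCommMonoid N] [PartialOrder N] (u : M) (v : N) (φ : M → N) : Prop :=
  ∀ x y : M,
    (∃ n : ℕ, 0 < n ∧ ∃ z : M, n • x + z + u ≤ n • y + z) ↔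
      (∃ m : ℕ, 0 < m ∧ ∃ w : N, m • φ x + v + w ≤ m • φ y + w)

/-!
States are real additive maps that are monotone for a translation-invariant cancellative
preorder `≼` with least element `0`. Such a map extends from a cofinal submonoid to the whole
monoid, one generator `g` at a time (the admissible values of `g` form a nonempty interval
because combining an upper and a lower constraint cancels `g`) and then by Zorn's lemma.

If `φ` is a stable order embedding, every state `s` of `M` is monotone for the pull-back of
the stable order `∃ c, a + c ≤ b + c` of `N`, so it extends from `φ(M)` to a state `g` of `N`
with `s = g ∘ φ`. Conversely, if `x` does not lie stably a unit below `y`, adjoining `y ≼ x`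
to the stable order of `M` keeps `u ⋠ 0`, which yields a state `s` with `s y ≤ s x`; writing
`s = g ∘ φ` shows that `φ x` does not lie stably a unit below `φ y` either.
-/

theorem exists_forall_fst_mul_le_snd (S : AddSubmonoid (ℤ × ℝ)) (hpos : ∃ p ∈ S, 0 < p.1)
    (hneg : ∃ p ∈ S, p.1 < 0) (hzero : ∀ p ∈ S, p.1 = 0 → 0 ≤ p.2) :
    ∃ α : ℝ, ∀ p ∈ S, p.1 * α ≤ p.2 := by
  have cross : ∀ p ∈ S, ∀ q ∈ S, p.1 < 0 → 0 < q.1 → p.2 / p.1 ≤ q.2 / q.1 := by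
    intro p hp q hq hp₁ hq₁
    obtain ⟨m, hm⟩ : ∃ m : ℕ, (m : ℤ) = q.1 := ⟨q.1.toNat, Int.toNat_of_nonneg hq₁.le⟩
    obtain ⟨k, hk⟩ : ∃ k : ℕ, (k : ℤ) = -p.1 := ⟨(-p.1).toNat, Int.toNat_of_nonneg (by omega)⟩
    -- `q.1 • p + (-p.1) • q` has first coordinate `0`
    have hr := hzero _ (add_mem (nsmul_mem hp m) (nsmul_mem hq k))
    simp only [Prod.fst_add, Prod.snd_add, Prod.smul_fst, Prod.smul_snd] at hr
    simp only [nsmul_eq_mul] at hr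
    have hm' : (m : ℝ) = q.1 := by exact_mod_cast hm
    have hk' : (k : ℝ) = -p.1 := by exact_mod_cast hk
    rw [hm, hk, hm', hk'] at hr
    have hp₁' : (p.1 : ℝ) < 0 := by exact_mod_cast hp₁
    have hq₁' : (0 : ℝ) < q.1 := by exact_mod_cast hq₁
    rw [div_le_iff_of_neg hp₁', div_mul_eq_mul_div, div_le_iff₀ hq₁']
    nlinarith [hr (by ring)]
  obtain ⟨q₀, hq₀, hq₀₁⟩ := hpos
  obtain ⟨p₀, hp₀, hp₀₁⟩ := hneg
  set L : Set ℝ := {t | ∃ p ∈ S, p.1 < 0 ∧ t = p.2 / p.1}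
  have hL : L.Nonempty := ⟨_, p₀, hp₀, hp₀₁, rfl⟩
  have hLq : ∀ q ∈ S, 0 < q.1 → sSup L ≤ q.2 / q.1 := fun q hq hq₁ =>
    csSup_le hL (by rintro _ ⟨p, hp, hp₁, rfl⟩; exact cross p hp q hq hp₁ hq₁)
  refine ⟨sSup L, fun p hp => ?_⟩
  rcases lt_trichotomy p.1 0 with hp₁ | hp₁ | hp₁
  · have hbdd : BddAbove L :=
      ⟨_, by rintro _ ⟨p', hp', hp'₁, rfl⟩; exact cross p' hp' q₀ hq₀ hp'₁ hq₀₁⟩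
    have := le_csSup hbdd ⟨p, hp, hp₁, rfl⟩
    rwa [div_le_iff_of_neg (by exact_mod_cast hp₁), mul_comm] at this
  · simpa [hp₁] using hzero p hp hp₁
  · have := hLq p hp hp₁
    rwa [le_div_iff₀ (by exact_mod_cast hp₁), mul_comm] at this

structure CancelPreorder (M : Type*) [AddCommMonoid M] where
  le : M → M → Prop
  zero_le : ∀ a, le 0 a
  le_trans : ∀ {a b c}, le a b → le b c → le a c
  add_le_add_right : ∀ {a b} (c : M), le a b → le (a + c) (b + c)
  le_of_add_le_add_right : ∀ {a b} (c : M), le (a + c) (b + c) → le a b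

namespace CancelPreorder

variable {M : Type*} [AddCommMonoid M] (P : CancelPreorder M)

theorem le_refl (a : M) : P.le a a := by
  simpa using P.add_le_add_right a (P.zero_le 0)

theorem le_add_right (a b : M) : P.le a (a + b) := by
  simpa [add_comm b] using P.add_le_add_right a (P.zero_le b)

theorem add_le_add {a b c d : M} (hab : P.le a b) (hcd : P.le c d) : P.le (a + c) (b + d) :=
  P.le_trans (P.add_le_add_right c hab) (by simpa only [add_comm b] using P.add_le_add_right b hcd)

theorem nsmul_le_nsmul {a b : M} (h : P.le a b) (n : ℕ) : P.le (n • a) (n • b) := by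
  induction n with
  | zero => simpa using P.le_refl 0
  | succ n ih => simpa only [succ_nsmul] using P.add_le_add ih h

theorem le_of_le_of_unit_le_zero {u : M} (hu : ∀ x, ∃ n : ℕ, P.le x (n • u)) (hu₀ : P.le u 0)
    (x y : M) : P.le x y := by
  obtain ⟨n, hn⟩ := hu x
  exact P.le_trans hn (P.le_trans (by simpa using P.nsmul_le_nsmul hu₀ n) (P.zero_le y))

theorem le_of_nsmul_le_nsmul {u : M} (hu₀ : ¬ P.le u 0) {m k : ℕ} (h : P.le (m • u) (k • u)) :
    m ≤ k := by
  by_contra! hkm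
  obtain ⟨d, rfl⟩ := Nat.exists_eq_add_of_lt hkm
  have h' : P.le ((d + 1) • u + k • u) (0 + k • u) := by
    convert h using 1
    · rw [← add_nsmul]; ring_nf
    · rw [zero_add]
  exact hu₀ (P.le_trans (by simpa [succ_nsmul'] using P.le_add_right u (d • u))
    (P.le_of_add_le_add_right _ h'))

/-- The cancel preorder generated by `P` and `x ≤ y`. -/
def adjoin (x y : M) : CancelPreorder M where
  le a b := ∃ k : ℕ, P.le (a + k • y) (b + k • x)
  zero_le a := ⟨0, by simpa using P.zero_le a⟩
  le_trans := by
    rintro a b c ⟨k, hk⟩ ⟨l, hl⟩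
    refine ⟨k + l, P.le_of_add_le_add_right b ?_⟩
    convert P.add_le_add hk hl using 1 <;> · rw [add_nsmul]; abel
  add_le_add_right := by
    rintro a b c ⟨k, hk⟩
    exact ⟨k, by simpa only [add_right_comm _ c] using P.add_le_add_right c hk⟩
  le_of_add_le_add_right := by
    rintro a b c ⟨k, hk⟩
    exact ⟨k, P.le_of_add_le_add_right c (by simpa only [add_right_comm _ c] using hk)⟩

theorem le_adjoin (x y : M) : (P.adjoin x y).le x y :=
  ⟨1, by simpa only [one_nsmul, add_comm x] using P.le_refl (y + x)⟩

theorem adjoin_le_of_le (x y : M) {a b : M} (h : P.le a b) : (P.adjoin x y).le a b :=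
  ⟨0, by simpa using h⟩

variable {P}

structure PartialState (P : CancelPreorder M) where
  dom : AddSubmonoid M
  toFun : M → ℝ
  map_add : ∀ a ∈ dom, ∀ b ∈ dom, toFun (a + b) = toFun a + toFun b
  monotone : ∀ a ∈ dom, ∀ b ∈ dom, P.le a b → toFun a ≤ toFun b

namespace PartialState

instance : Preorder P.PartialState where
  le p q := p.dom ≤ q.dom ∧ Set.EqOn q.toFun p.toFun p.dom
  le_refl p := ⟨le_rfl, fun _ _ => rfl⟩
  le_trans p q r hpq hqr := ⟨hpq.1.trans hqr.1, fun x hx => (hqr.2 (hpq.1 hx)).trans (hpq.2 hx)⟩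

theorem exists_le_mem_dom_of_forall (p : P.PartialState) (g : M) (α : ℝ)
    (hα : ∀ a ∈ p.dom, ∀ b ∈ p.dom, ∀ m k : ℕ, P.le (a + m • g) (b + k • g) →
      p.toFun a + m * α ≤ p.toFun b + k * α) :
    ∃ q, p ≤ q ∧ g ∈ q.dom := by
  classical
  let D : AddSubmonoid M :=
    { carrier := {x | ∃ t : M × ℕ, t.1 ∈ p.dom ∧ t.1 + t.2 • g = x}
      zero_mem' := ⟨(0, 0), zero_mem _, by simp⟩
      add_mem' := by
        rintro _ _ ⟨⟨a, m⟩, ha, rfl⟩ ⟨⟨b, k⟩, hb, rfl⟩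
        exact ⟨(a + b, m + k), add_mem ha hb, by simp only [add_nsmul]; abel⟩ }
  let f : M → ℝ := fun x =>
    if h : ∃ t : M × ℕ, t.1 ∈ p.dom ∧ t.1 + t.2 • g = x then
      p.toFun h.choose.1 + h.choose.2 * α else 0
  have hf : ∀ a ∈ p.dom, ∀ n : ℕ, f (a + n • g) = p.toFun a + n * α := by
    intro a ha n
    have h : ∃ t : M × ℕ, t.1 ∈ p.dom ∧ t.1 + t.2 • g = a + n • g := ⟨(a, n), ha, rfl⟩
    obtain ⟨hmem, heq⟩ := h.choose_spec
    have h₁ := hα _ hmem _ ha _ _ (by rw [heq]; exact P.le_refl _)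
    have h₂ := hα _ ha _ hmem _ _ (by rw [heq]; exact P.le_refl _)
    simp only [f, dif_pos h]
    linarith
  refine ⟨⟨D, f, ?_, ?_⟩, ⟨fun a ha => ⟨(a, 0), ha, by simp⟩, fun a ha => ?_⟩,
    ⟨(0, 1), zero_mem _, by simp⟩⟩
  · rintro _ ⟨⟨a, m⟩, ha, rfl⟩ _ ⟨⟨b, k⟩, hb, rfl⟩
    have hsum : a + m • g + (b + k • g) = a + b + (m + k) • g := by rw [add_nsmul]; abel
    rw [hsum, hf _ (add_mem ha hb), hf _ ha, hf _ hb, p.map_add _ ha _ hb]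
    push_cast
    ring
  · rintro _ ⟨⟨a, m⟩, ha, rfl⟩ _ ⟨⟨b, k⟩, hb, rfl⟩ h
    rw [hf _ ha, hf _ hb]
    exact hα _ ha _ hb _ _ h
  · simpa using hf a ha 0

/-- A value `α` at `g` extends `p` exactly when `c * α ≤ e` for every `(c, e)` here. -/
def constraints (p : P.PartialState) (g : M) : AddSubmonoid (ℤ × ℝ) where
  carrier := {t | ∃ a ∈ p.dom, ∃ b ∈ p.dom, ∃ m k : ℕ,
    P.le (a + m • g) (b + k • g) ∧ t = ((m : ℤ) - k, p.toFun b - p.toFun a)}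
  zero_mem' := ⟨0, zero_mem _, 0, zero_mem _, 0, 0, P.le_refl _, by ext <;> simp⟩
  add_mem' := by
    rintro _ _ ⟨a, ha, b, hb, m, k, h, rfl⟩ ⟨a', ha', b', hb', m', k', h', rfl⟩
    refine ⟨a + a', add_mem ha ha', b + b', add_mem hb hb', m + m', k + k', ?_, ?_⟩
    · convert P.add_le_add h h' using 1 <;> · rw [add_nsmul]; abel
    · rw [p.map_add _ ha _ ha', p.map_add _ hb _ hb', Prod.mk_add_mk]
      push_cast
      congr 1 <;> ring

theorem exists_le_mem_dom (p : P.PartialState) (hp : ∀ x, ∃ b ∈ p.dom, P.le x b) (g : M) :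
    ∃ q, p ≤ q ∧ g ∈ q.dom := by
  obtain ⟨b, hb, hgb⟩ := hp g
  obtain ⟨α, hα⟩ := exists_forall_fst_mul_le_snd (p.constraints g)
    ⟨_, ⟨0, zero_mem _, b, hb, 1, 0, by simpa using hgb, rfl⟩, by simp⟩
    ⟨_, ⟨0, zero_mem _, 0, zero_mem _, 0, 1, by simpa using P.zero_le g, rfl⟩, by simp⟩
    (by
      rintro _ ⟨a, ha, b, hb, m, k, h, rfl⟩ hmk
      obtain rfl : m = k := by simpa [sub_eq_zero] using hmk
      simpa using p.monotone a ha b hb (P.le_of_add_le_add_right _ h))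
  refine p.exists_le_mem_dom_of_forall g α fun a ha b hb m k h => ?_
  have := hα _ ⟨a, ha, b, hb, m, k, h, rfl⟩
  push_cast at this
  linarith

theorem exists_upperBound_of_isChain {c : Set P.PartialState} (hc : IsChain (· ≤ ·) c)
    {p₀ : P.PartialState} (hp₀ : p₀ ∈ c) : ∃ ub, ∀ q ∈ c, q ≤ ub := by
  classical
  have hdir := hc.directedOn
  let D : AddSubmonoid M :=
    { carrier := {x | ∃ p ∈ c, x ∈ p.dom}
      zero_mem' := ⟨p₀, hp₀, zero_mem _⟩
      add_mem' := by
        rintro x y ⟨p, hp, hx⟩ ⟨q, hq, hy⟩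
        obtain ⟨r, hr, hpr, hqr⟩ := hdir p hp q hq
        exact ⟨r, hr, add_mem (hpr.1 hx) (hqr.1 hy)⟩ }
  let f : M → ℝ := fun x => if h : ∃ p ∈ c, x ∈ p.dom then h.choose.toFun x else 0
  have hf : ∀ p ∈ c, ∀ x ∈ p.dom, f x = p.toFun x := by
    intro p hp x hx
    have h : ∃ p ∈ c, x ∈ p.dom := ⟨p, hp, hx⟩
    obtain ⟨r, -, hr, hpr⟩ := hdir _ h.choose_spec.1 p hp
    simp only [f, dif_pos h]
    rw [← hr.2 h.choose_spec.2, hpr.2 hx]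
  have hcommon : ∀ x ∈ D, ∀ y ∈ D, ∃ r ∈ c, x ∈ r.dom ∧ y ∈ r.dom := by
    rintro x ⟨p, hp, hx⟩ y ⟨q, hq, hy⟩
    obtain ⟨r, hr, hpr, hqr⟩ := hdir p hp q hq
    exact ⟨r, hr, hpr.1 hx, hqr.1 hy⟩
  refine ⟨⟨D, f, fun x hx y hy => ?_, fun x hx y hy hxy => ?_⟩,
    fun p hp => ⟨fun x hx => ⟨p, hp, hx⟩, hf p hp⟩⟩
  · obtain ⟨r, hr, hxr, hyr⟩ := hcommon x hx y hy
    rw [hf r hr _ (add_mem hxr hyr), hf r hr x hxr, hf r hr y hyr, r.map_add x hxr y hyr]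
  · obtain ⟨r, hr, hxr, hyr⟩ := hcommon x hx y hy
    rw [hf r hr x hxr, hf r hr y hyr]
    exact r.monotone x hxr y hyr hxy

theorem exists_addMonoidHom (p : P.PartialState) (hp : ∀ x, ∃ b ∈ p.dom, P.le x b) :
    ∃ s : M →+ ℝ, (∀ a b, P.le a b → s a ≤ s b) ∧ Set.EqOn s p.toFun p.dom := by
  obtain ⟨m, hpm, hmax⟩ := zorn_le_nonempty_Ici₀ p
    (fun c _ hc q hq => exists_upperBound_of_isChain hc hq) p le_rfl
  have hdom : ∀ x, x ∈ m.dom := fun x => by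
    obtain ⟨q, hmq, hxq⟩ := m.exists_le_mem_dom
      (fun y => (hp y).imp fun b hb => ⟨hpm.1 hb.1, hb.2⟩) x
    exact (hmax hmq).1 hxq
  exact ⟨AddMonoidHom.mk' m.toFun fun a b => m.map_add a (hdom a) b (hdom b),
    fun a b => m.monotone a (hdom a) b (hdom b), hpm.2⟩

end PartialState

theorem exists_extension {L : Type*} [AddCommMonoid L] (φ : L →+ M) (s : L →+ ℝ)
    (hφ : ∀ x, ∃ a, P.le x (φ a)) (hs : ∀ a b, P.le (φ a) (φ b) → s a ≤ s b) :
    ∃ g : M →+ ℝ, (∀ x y, P.le x y → g x ≤ g y) ∧ g.comp φ = s := by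
  classical
  let f : M → ℝ := fun x => if h : ∃ a, φ a = x then s h.choose else 0
  have hf : ∀ a, f (φ a) = s a := by
    intro a
    have h : ∃ a', φ a' = φ a := ⟨a, rfl⟩
    simp only [f, dif_pos h]
    exact le_antisymm (hs _ _ (by rw [h.choose_spec]; exact P.le_refl _))
      (hs _ _ (by rw [h.choose_spec]; exact P.le_refl _))
  let p : P.PartialState :=
    { dom := AddMonoidHom.mrange φ
      toFun := f
      map_add := by
        rintro _ ⟨a, rfl⟩ _ ⟨b, rfl⟩
        rw [← map_add, hf, hf, hf, map_add]
      monotone := by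
        rintro _ ⟨a, rfl⟩ _ ⟨b, rfl⟩ h
        rw [hf, hf]
        exact hs a b h }
  obtain ⟨g, hg, hgp⟩ := p.exists_addMonoidHom fun x =>
    let ⟨a, h⟩ := hφ x; ⟨φ a, AddMonoidHom.mem_mrange.2 ⟨a, rfl⟩, h⟩
  exact ⟨g, hg, AddMonoidHom.ext fun a => (hgp (AddMonoidHom.mem_mrange.2 ⟨a, rfl⟩)).trans (hf a)⟩

theorem exists_addMonoidHom_eq_one {u : M} (hu : ∀ x, ∃ n : ℕ, P.le x (n • u))
    (hu₀ : ¬ P.le u 0) : ∃ s : M →+ ℝ, (∀ a b, P.le a b → s a ≤ s b) ∧ s u = 1 := by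
  obtain ⟨s, hs, hsu⟩ := exists_extension (multiplesHom M u) (Nat.castAddMonoidHom ℝ)
    (by simpa using hu) fun m k h => by simpa using P.le_of_nsmul_le_nsmul hu₀ h
  exact ⟨s, hs, by simpa using DFunLike.congr_fun hsu 1⟩

section StableOrder

variable [PartialOrder M] [IsOrderedAddMonoid M]

def stable (hpos : ∀ a : M, 0 ≤ a) : CancelPreorder M where
  le a b := ∃ c, a + c ≤ b + c
  zero_le a := ⟨0, by simpa using hpos a⟩
  le_trans := by
    rintro a b d ⟨c, hc⟩ ⟨c', hc'⟩
    refine ⟨c + c', ?_⟩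
    calc a + (c + c') = a + c + c' := (add_assoc ..).symm
      _ ≤ b + c + c' := add_le_add_left hc c'
      _ = b + c' + c := add_right_comm ..
      _ ≤ d + c' + c := add_le_add_left hc' c
      _ = d + (c + c') := by abel
  add_le_add_right := by
    rintro a b c ⟨w, hw⟩
    exact ⟨w, by simpa only [add_right_comm _ c] using add_le_add_left hw c⟩
  le_of_add_le_add_right := by
    rintro a b c ⟨w, hw⟩
    exact ⟨c + w, by simpa only [add_assoc] using hw⟩

theorem stable_le_of_le (hpos : ∀ a : M, 0 ≤ a) {a b : M} (h : a ≤ b) : (stable hpos).le a b :=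
  ⟨0, by simpa using h⟩

end StableOrder

end CancelPreorder

open CancelPreorder

section States

variable {M N : Type*} [AddCommMonoid M] [PartialOrder M] [AddCommMonoid N] [PartialOrder N]
  {u : M} {v : N} {s : M → ℝ}

theorem IsState.map_nsmul (hs : IsState u s) (n : ℕ) (x : M) : s (n • x) = n * s x := by
  simpa using _root_.map_nsmul (⟨⟨s, hs.1⟩, hs.2.1⟩ : M →+ ℝ) n x

theorem IsState.nsmul_add_le (hs : IsState u s) {n : ℕ} {x y z : M}
    (h : n • x + u + z ≤ n • y + z) : n * s x + 1 ≤ n * s y := by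
  have := hs.2.2.1 _ _ h
  rw [hs.2.1, hs.2.1, hs.2.1, hs.map_nsmul, hs.map_nsmul, hs.2.2.2] at this
  linarith

theorem AddMonoidHom.isState (g : M →+ ℝ) (hg : Monotone g) (hgu : g u = 1) : IsState u g :=
  ⟨map_zero g, map_add g, fun _ _ h => hg h, hgu⟩

theorem IsState.comp {g : N → ℝ} (hg : IsState v g) (φ : M →+ N) (hφ : Monotone φ)
    (hφu : φ u = v) : IsState u (g ∘ φ) :=
  ⟨by simp [hg.1], fun x y => by simp [hg.2.1], fun x y h => hg.2.2.1 _ _ (hφ h),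
    by simp [hφu, hg.2.2.2]⟩

theorem IsStableOrderEmbedding.le_of_stable_le [IsOrderedAddMonoid N] (hposN : ∀ a : N, 0 ≤ a)
    {φ : M →+ N} (hφ : IsStableOrderEmbedding u v φ) (hφu : φ u = v)
    (hs : IsState u s) {a b : M} (hab : (stable hposN).le (φ a) (φ b)) : s a ≤ s b := by
  obtain ⟨c, hc⟩ := hab
  -- `φ (n • a) + v` lies stably below `φ (n • b + u)`; the embedding brings this back to `M`
  have key : ∀ n : ℕ, 0 < n → n * s a < n * s b + 1 := by
    intro n hn
    have hN : ∃ m : ℕ, 0 < m ∧ ∃ w, m • φ (n • a) + v + w ≤ m • φ (n • b + u) + w := by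
      refine ⟨1, one_pos, n • c, ?_⟩
      calc 1 • φ (n • a) + v + n • c = n • (φ a + c) + v := by
            rw [one_nsmul, map_nsmul, smul_add]; abel
        _ ≤ n • (φ b + c) + v := add_le_add_left (nsmul_le_nsmul_right hc n) v
        _ = 1 • φ (n • b + u) + n • c := by
            rw [one_nsmul, map_add, map_nsmul, hφu, smul_add]; abel
    obtain ⟨k, hk, z, hz⟩ := (hφ (n • a) (n • b + u)).2 hN
    have h := hs.nsmul_add_le (by rwa [add_right_comm] at hz)
    rw [hs.map_nsmul, hs.2.1, hs.map_nsmul, hs.2.2.2] at h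
    have hk' : (1 : ℝ) ≤ k := by exact_mod_cast hk
    nlinarith
  refine le_of_forall_pos_lt_add fun ε hε => ?_
  obtain ⟨n, hn⟩ := exists_nat_gt (1 / ε)
  have hn₀ : (0 : ℝ) < n := (one_div_pos.2 hε).trans hn
  have := key n (by exact_mod_cast hn₀)
  rw [div_lt_iff₀ hε] at hn
  nlinarith

theorem stateSpace_eq_of_isStableOrderEmbedding [IsOrderedAddMonoid N] (hposN : ∀ a : N, 0 ≤ a)
    (hv : ∀ x : N, ∃ n : ℕ, x ≤ n • v) (φ : M →+ N) (hφmono : Monotone φ) (hφu : φ u = v)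
    (hφ : IsStableOrderEmbedding u v φ) :
    StateSpace M u = {s : M → ℝ | ∃ g ∈ StateSpace N v, s = g ∘ φ} := by
  ext s
  refine ⟨fun hs => ?_, ?_⟩
  · have hcof : ∀ y, ∃ a, (stable hposN).le y (φ a) := fun y =>
      let ⟨n, hn⟩ := hv y
      ⟨n • u, by rw [map_nsmul, hφu]; exact stable_le_of_le hposN hn⟩
    obtain ⟨g, hg, hgφ⟩ := (stable hposN).exists_extension φ ⟨⟨s, hs.1⟩, hs.2.1⟩ hcof
      fun a b h => hφ.le_of_stable_le hposN hφu hs h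
    have hgs : ∀ x, g (φ x) = s x := fun x => DFunLike.congr_fun hgφ x
    refine ⟨g, g.isState (fun x y h => hg x y (stable_le_of_le hposN h)) ?_, funext fun x => ?_⟩
    · rw [← hφu, hgs]
      exact hs.2.2.2
    · exact (hgs x).symm
  · rintro ⟨g, hg, rfl⟩
    exact hg.comp φ hφmono hφu

theorem exists_nsmul_of_adjoin_le_zero [IsOrderedAddMonoid M] (hpos : ∀ a : M, 0 ≤ a)
    (hu : ∀ x : M, ∃ n : ℕ, x ≤ n • u) {x y : M} (h : ((stable hpos).adjoin y x).le u 0) :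
    ∃ n : ℕ, 0 < n ∧ ∃ z, n • x + z + u ≤ n • y + z := by
  obtain ⟨k, c, hc⟩ := h
  rcases Nat.eq_zero_or_pos k with rfl | hk
  · -- `u + c ≤ c`, so every element lies stably below every other
    have hu₀ : (stable hpos).le u 0 := ⟨c, by simpa using hc⟩
    obtain ⟨z, hz⟩ := (stable hpos).le_of_le_of_unit_le_zero
      (fun a => (hu a).imp fun _ => stable_le_of_le hpos) hu₀ (x + u) y
    exact ⟨1, one_pos, z, by simpa [add_right_comm] using hz⟩
  · exact ⟨k, hk, c, by simpa [add_comm, add_left_comm] using hc⟩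

theorem isStableOrderEmbedding_of_stateSpace_subset [IsOrderedAddMonoid M]
    (hposM : ∀ a : M, 0 ≤ a) (hu : ∀ x : M, ∃ n : ℕ, x ≤ n • u) (φ : M →+ N)
    (hφmono : Monotone φ) (hφu : φ u = v)
    (h : StateSpace M u ⊆ {s : M → ℝ | ∃ g ∈ StateSpace N v, s = g ∘ φ}) :
    IsStableOrderEmbedding u v φ := by
  intro x y
  refine ⟨fun ⟨n, hn, z, hz⟩ => ⟨n, hn, φ z, ?_⟩, fun ⟨m, hm, w, hw⟩ => ?_⟩
  · have := hφmono hz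
    rwa [map_add, map_add, map_add, map_nsmul, map_nsmul, hφu, add_right_comm] at this
  by_contra hxy
  set P := (stable hposM).adjoin y x
  have hle : ∀ {a b}, a ≤ b → P.le a b := fun hab =>
    adjoin_le_of_le _ _ _ (stable_le_of_le hposM hab)
  obtain ⟨s, hs, hsu⟩ := P.exists_addMonoidHom_eq_one (fun a => (hu a).imp fun _ => hle)
    fun h₀ => hxy (exists_nsmul_of_adjoin_le_zero hposM hu h₀)
  obtain ⟨g, hg, hsg⟩ := h (s.isState (fun a b hab => hs a b (hle hab)) hsu)
  have hyx : s y ≤ s x := hs y x (le_adjoin _ y x)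
  have hgs : ∀ a, g (φ a) = s a := fun a => (congr_fun hsg a).symm
  have := hg.nsmul_add_le hw
  rw [hgs, hgs] at this
  nlinarith

end States

/-- Let `φ : (M, ≤, u) → (N, ≤, v)` be a morphism of scaled partially ordered abelian
semigroups. Then `φ` is a stable order embedding iff
`S(M, ≤, u) = { g ∘ φ : g ∈ S(N, ≤, v) }`. -/
theorem stableOrderEmbedding_iff_stateSpace_eq
    {M N : Type*} [AddCommMonoid M] [PartialOrder M] [AddCommMonoid N] [PartialOrder N]
    (hposM : ∀ a : M, 0 ≤ a) (haddM : ∀ a b c : M, a ≤ b → a + c ≤ b + c)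
    (hposN : ∀ a : N, 0 ≤ a) (haddN : ∀ a b c : N, a ≤ b → a + c ≤ b + c)
    (u : M) (hu : ∀ x : M, ∃ n : ℕ, x ≤ n • u)
    (v : N) (hv : ∀ x : N, ∃ n : ℕ, x ≤ n • v)
    (φ : M → N) (hφ0 : φ 0 = 0) (hφadd : ∀ x y : M, φ (x + y) = φ x + φ y)
    (hφmono : ∀ x y : M, x ≤ y → φ x ≤ φ y) (hφu : φ u = v) :
    IsStableOrderEmbedding u v φ ↔
      StateSpace M u = {s : M → ℝ | ∃ g ∈ StateSpace N v, s = g ∘ φ} := by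
  have : IsOrderedAddMonoid M := { add_le_add_left := fun a b h c => haddM a b c h }
  have : IsOrderedAddMonoid N := { add_le_add_left := fun a b h c => haddN a b c h }
  let Φ : M →+ N := ⟨⟨φ, hφ0⟩, hφadd⟩
  have hΦ : Monotone Φ := fun x y => hφmono x y
  exact ⟨stateSpace_eq_of_isStableOrderEmbedding hposN hv Φ hΦ hφu,
    fun h => isStableOrderEmbedding_of_stateSpace_subset hposM hu Φ hΦ hφu h.subset⟩
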